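/- arXiv:2302.02224 — 3 statements merged into one kernel-verified Lean document; each statement's English description precedes it below -/
import Mathlib

section
/- (Variance asymptotics of the noise term.) Let x ∈ ℝ^d be a continuity point of the bounded density p, and let X have density p. Then lim_{h→0⁺} h^d · ∫ k_h(x − y)² p(y) dy = R(k)·p(x). Consequently, for noise ε ∼ N(0,σ²) independent of X, the single noise summand v(x) := k_h(x − X)·ε satisfies E[h^d · v(x)²] → R(k)·p(x)·σ² as h → 0⁺. -/
open MeasureTheory ProbabilityTheory Filter Topology
open scoped NNReal ENNReal

/-- The rescaled kernel `k_h(u) = h^(-d) k(u/h)`. -/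
noncomputable def rescaledKernel (d : ℕ) (k : (Fin d → ℝ) → ℝ) (h : ℝ)
    (u : Fin d → ℝ) : ℝ :=
  (h ^ d)⁻¹ * k (h⁻¹ • u)

lemma aux_integral_sq_mul_exp_neg_mul_sq {b : ℝ} (hb : 0 < b) :
    ∫ x : ℝ, x ^ 2 * Real.exp (-b * x ^ 2)
      = Real.sqrt Real.pi / 2 * b ^ (-(3:ℝ)/2) := by
  have h1 : ∫ x : ℝ, x ^ 2 * Real.exp (-b * x ^ 2)
      = 2 * ∫ x in Set.Ioi (0:ℝ), x ^ 2 * Real.exp (-b * x ^ 2) := by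
    rw [← integral_comp_abs (f := fun x => x ^ 2 * Real.exp (-b * x ^ 2))]
    congr 1; ext x; rw [sq_abs]
  have h2 : ∫ x in Set.Ioi (0:ℝ), x ^ 2 * Real.exp (-b * x ^ 2)
      = b ^ (-((2:ℝ) + 1) / 2) * (1 / 2) * Real.Gamma (((2:ℝ) + 1) / 2) := by
    rw [← integral_rpow_mul_exp_neg_mul_rpow (by norm_num : (0:ℝ) < 2)
      (by norm_num : (-1:ℝ) < 2) hb]
    refine setIntegral_congr_fun measurableSet_Ioi (fun y hy => ?_)
    have : y ^ (2:ℝ) = y ^ 2 := by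
      rw [show (2:ℝ) = ((2:ℕ):ℝ) by norm_num, Real.rpow_natCast]
    rw [this]
  have hG : Real.Gamma (((2:ℝ) + 1) / 2) = Real.sqrt Real.pi / 2 := by
    have h32 : ((2:ℝ) + 1) / 2 = 1/2 + 1 := by norm_num
    rw [h32, Real.Gamma_add_one (by norm_num), Real.Gamma_one_half_eq]
    ring
  rw [h1, h2, hG]
  have : (-((2:ℝ) + 1) / 2) = (-(3:ℝ)/2) := by norm_num
  rw [this]
  ring

lemma aux_gaussian_sq (v : ℝ≥0) :
    ∫ y : ℝ, y ^ 2 ∂(gaussianReal 0 v) = (v : ℝ) := by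
  by_cases hv : v = 0
  · subst hv
    simp
  · rw [gaussianReal_of_var_ne_zero 0 hv]
    have e0 : volume.withDensity (gaussianPDF 0 v)
        = volume.withDensity (fun y => ((Real.toNNReal (gaussianPDFReal 0 v y)) : ℝ≥0∞)) := rfl
    rw [e0, integral_withDensity_eq_integral_smul
      ((measurable_gaussianPDFReal 0 v).real_toNNReal) (fun y : ℝ => y ^ 2)]
    have hvpos : (0:ℝ) < (v:ℝ) := by
      exact_mod_cast pos_iff_ne_zero.mpr hv
    have h2v : (0:ℝ) < 2 * (v:ℝ) := by positivity
    have hb : (0:ℝ) < (2 * (v:ℝ))⁻¹ := by positivity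
    have heq : ∀ y : ℝ, (Real.toNNReal (gaussianPDFReal 0 v y)) • y ^ 2
        = (Real.sqrt (2 * Real.pi * (v:ℝ)))⁻¹
          * (y ^ 2 * Real.exp (-(2 * (v:ℝ))⁻¹ * y ^ 2)) := by
      intro y
      rw [NNReal.smul_def, Real.coe_toNNReal _ (gaussianPDFReal_nonneg _ _ _),
        gaussianPDFReal]
      have : -(y - 0) ^ 2 / (2 * (v:ℝ)) = -(2 * (v:ℝ))⁻¹ * y ^ 2 := by
        rw [sub_zero, div_eq_mul_inv]; ring
      rw [this, smul_eq_mul]; ring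
    simp_rw [heq]
    rw [integral_const_mul, aux_integral_sq_mul_exp_neg_mul_sq hb]
    have hs : ((2 * (v:ℝ))⁻¹) ^ (-(3:ℝ)/2) = (2 * (v:ℝ)) ^ ((3:ℝ)/2) := by
      rw [show (-(3:ℝ)/2) = -((3:ℝ)/2) by norm_num,
        Real.rpow_neg (inv_nonneg.mpr h2v.le), Real.inv_rpow h2v.le, inv_inv]
    have hss : (2 * (v:ℝ)) ^ ((3:ℝ)/2) = 2 * (v:ℝ) * Real.sqrt (2 * (v:ℝ)) := by
      rw [show ((3:ℝ)/2) = 1 + 1/2 by norm_num, Real.rpow_add h2v, Real.rpow_one,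
        ← Real.sqrt_eq_rpow]
    have hsqrt : Real.sqrt (2 * Real.pi * (v:ℝ))
        = Real.sqrt Real.pi * Real.sqrt (2 * (v:ℝ)) := by
      rw [show 2 * Real.pi * (v:ℝ) = Real.pi * (2 * (v:ℝ)) by ring,
        Real.sqrt_mul Real.pi_pos.le]
    rw [hs, hss, hsqrt]
    have h1 : (0:ℝ) < Real.sqrt Real.pi := Real.sqrt_pos.mpr Real.pi_pos
    have h2 : (0:ℝ) < Real.sqrt (2 * (v:ℝ)) := Real.sqrt_pos.mpr h2v
    have e1 : Real.sqrt Real.pi / 2 * (2 * (v:ℝ) * Real.sqrt (2 * (v:ℝ)))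
        = (Real.sqrt Real.pi * Real.sqrt (2 * (v:ℝ))) * (v:ℝ) := by ring
    rw [e1, inv_mul_cancel_left₀ (by positivity)]

/-- (Variance asymptotics of the noise term.) Let `x` be a continuity point of the bounded
density `p`, and let `X` have density `p`. Then `h^d ∫ k_h(x − y)² p(y) dy → R(k) p(x)` as
`h → 0⁺`, and consequently, for noise `ε ∼ N(0,σ²)` independent of `X`, the noise summand
`v(x) := k_h(x − X) ε` satisfies `E[h^d v(x)²] → R(k) p(x) σ²` as `h → 0⁺`. -/
theorem variance_asymptotics_noise_term
    (d : ℕ) (hd : 1 ≤ d)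
    (k : (Fin d → ℝ) → ℝ)
    (hk_meas : Measurable k)
    (hk_nonneg : ∀ u, 0 ≤ k u)
    (hk_bdd : ∃ C, ∀ u, k u ≤ C)
    (hk_symm : ∀ u, k (-u) = k u)
    (hk_int : Integrable k volume)
    (hk_int_one : (∫ u, k u) = 1)
    (hk_mom1_int : ∀ i, Integrable (fun u => u i * k u) volume)
    (hk_mom1 : ∀ i, (∫ u, u i * k u) = 0)
    (μ₂ : ℝ)
    (hk_mom2_int : ∀ i j, Integrable (fun u => u i * u j * k u) volume)
    (hk_mom2 : ∀ i j : Fin d, (∫ u, u i * u j * k u) = if i = j then μ₂ else 0)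
    (R : ℝ)
    (hk_sq_int : Integrable (fun u => (k u) ^ 2) volume)
    (hk_R : (∫ u, (k u) ^ 2) = R)
    -- probability space, random vector `X` with bounded density `p`, independent noise `ε`
    (Ω : Type*) [MeasureSpace Ω] [IsProbabilityMeasure (ℙ : Measure Ω)]
    (X : Ω → (Fin d → ℝ)) (hX_meas : Measurable X)
    (p : (Fin d → ℝ) → ℝ) (hp_nonneg : ∀ y, 0 ≤ p y) (hp_meas : Measurable p)
    (hp_bdd : ∃ C, ∀ y, p y ≤ C)
    (hX_law : Measure.map X ℙ = volume.withDensity (fun y => ENNReal.ofReal (p y)))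
    (ε : Ω → ℝ) (hε_meas : Measurable ε)
    (σ : ℝ)
    (hε_law : Measure.map ε ℙ = gaussianReal 0 (σ ^ 2).toNNReal)
    (hindep : IndepFun X ε ℙ)
    (x : Fin d → ℝ) (hx_cont : ContinuousAt p x) :
    Tendsto (fun h : ℝ => h ^ d * ∫ y, (rescaledKernel d k h (x - y)) ^ 2 * p y)
      (𝓝[>] (0 : ℝ)) (𝓝 (R * p x))
    ∧
    Tendsto (fun h : ℝ => ∫ ω, h ^ d * (rescaledKernel d k h (x - X ω) * ε ω) ^ 2 ∂ℙ)
      (𝓝[>] (0 : ℝ)) (𝓝 (R * p x * σ ^ 2)) := by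
  obtain ⟨C, hC⟩ := hp_bdd
  have key : ∀ h : ℝ, h ∈ Set.Ioi (0:ℝ) →
      h ^ d * ∫ y, (rescaledKernel d k h (x - y)) ^ 2 * p y
        = ∫ u, (k u) ^ 2 * p (x - h • u) := by
    intro h hh
    rw [Set.mem_Ioi] at hh
    have hhd : (0:ℝ) < h ^ d := pow_pos hh d
    set G : (Fin d → ℝ) → ℝ := fun u => (k u) ^ 2 * p (x - h • u) with hG
    have e1 : ∀ y, (rescaledKernel d k h (x - y)) ^ 2 * p y
        = ((h ^ d)⁻¹) ^ 2 * G (h⁻¹ • (x - y)) := by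
      intro y
      simp only [hG, rescaledKernel, mul_pow]
      rw [smul_inv_smul₀ (ne_of_gt hh), sub_sub_cancel]
      ring
    simp_rw [e1]
    rw [integral_const_mul]
    have e2 : ∫ y, G (h⁻¹ • (x - y)) = ∫ z, G (h⁻¹ • z) :=
      integral_sub_left_eq_self (fun z => G (h⁻¹ • z)) volume x
    rw [e2, Measure.integral_comp_inv_smul_of_nonneg volume G (le_of_lt hh),
      Module.finrank_fin_fun, smul_eq_mul]
    field_simp
  have keylim : Tendsto (fun h : ℝ => ∫ u, (k u) ^ 2 * p (x - h • u))
      (𝓝[>] (0:ℝ)) (𝓝 (R * p x)) := by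
    have hRp : R * p x = ∫ u, (k u) ^ 2 * p x := by rw [integral_mul_const, hk_R]
    rw [hRp]
    apply tendsto_integral_filter_of_dominated_convergence (bound := fun u => (k u) ^ 2 * C)
    · refine Eventually.of_forall fun h => ?_
      exact ((hk_meas.pow_const 2).mul
        (hp_meas.comp (measurable_const.sub (measurable_id.const_smul h)))).aestronglyMeasurable
    · refine Eventually.of_forall fun h => ae_of_all _ fun u => ?_
      have h0 : 0 ≤ (k u) ^ 2 * p (x - h • u) := mul_nonneg (by positivity) (hp_nonneg _)
      rw [Real.norm_eq_abs, abs_of_nonneg h0]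
      exact mul_le_mul_of_nonneg_left (hC _) (by positivity)
    · exact hk_sq_int.mul_const C
    · refine ae_of_all _ fun u => ?_
      have h1 : Tendsto (fun h : ℝ => x - h • u) (𝓝 0) (𝓝 x) := by
        have hc : Continuous fun h : ℝ => x - h • u :=
          continuous_const.sub (continuous_id.smul continuous_const)
        have := hc.tendsto 0
        simpa using this
      exact tendsto_const_nhds.mul
        (hx_cont.tendsto.comp (h1.mono_left nhdsWithin_le_nhds))
  have first : Tendsto (fun h : ℝ => h ^ d * ∫ y, (rescaledKernel d k h (x - y)) ^ 2 * p y)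
      (𝓝[>] (0 : ℝ)) (𝓝 (R * p x)) := by
    apply keylim.congr'
    filter_upwards [self_mem_nhdsWithin] with h hh
    exact (key h hh).symm
  refine ⟨first, ?_⟩
  have hεsq : ∫ ω, (ε ω) ^ 2 ∂ℙ = σ ^ 2 := by
    have h1 : ∫ y : ℝ, y ^ 2 ∂(Measure.map ε ℙ) = ∫ ω, (ε ω) ^ 2 ∂ℙ :=
      integral_map hε_meas.aemeasurable (by fun_prop)
    rw [← h1, hε_law, aux_gaussian_sq, Real.coe_toNNReal _ (sq_nonneg σ)]
  have key2 : ∀ h : ℝ, ∫ ω, h ^ d * (rescaledKernel d k h (x - X ω) * ε ω) ^ 2 ∂ℙ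
      = (h ^ d * ∫ y, (rescaledKernel d k h (x - y)) ^ 2 * p y) * σ ^ 2 := by
    intro h
    set f : (Fin d → ℝ) → ℝ := fun y => (rescaledKernel d k h (x - y)) ^ 2 with hf
    have hfm : Measurable f := by
      apply Measurable.pow_const
      exact measurable_const.mul
        (hk_meas.comp ((measurable_const.sub measurable_id).const_smul h⁻¹))
    have e0 : (fun ω => h ^ d * (rescaledKernel d k h (x - X ω) * ε ω) ^ 2)
        = fun ω => h ^ d * (f (X ω) * (ε ω) ^ 2) := by
      funext ω; simp only [hf]; ring
    rw [e0, integral_const_mul]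
    have hind2 : IndepFun (fun ω => f (X ω)) (fun ω => (ε ω) ^ 2) ℙ :=
      hindep.comp hfm (measurable_id.pow_const 2)
    rw [show ∫ ω, f (X ω) * (ε ω) ^ 2 ∂ℙ = (∫ ω, f (X ω) ∂ℙ) * ∫ ω, (ε ω) ^ 2 ∂ℙ from
      hind2.integral_mul_eq_mul_integral ((hfm.comp hX_meas).aestronglyMeasurable)
      ((hε_meas.pow_const 2).aestronglyMeasurable)]
    have e1 : ∫ ω, f (X ω) ∂ℙ = ∫ y, f y ∂(Measure.map X ℙ) :=
      (integral_map hX_meas.aemeasurable hfm.aestronglyMeasurable).symm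
    rw [e1, hX_law]
    have e2 : volume.withDensity (fun y => ENNReal.ofReal (p y))
        = volume.withDensity (fun y => (((p y).toNNReal : ℝ≥0) : ℝ≥0∞)) := rfl
    rw [e2, integral_withDensity_eq_integral_smul hp_meas.real_toNNReal f]
    have e3 : ∀ y, (p y).toNNReal • f y = f y * p y := by
      intro y; rw [NNReal.smul_def, Real.coe_toNNReal _ (hp_nonneg _), smul_eq_mul, mul_comm]
    simp_rw [e3, hεsq]
    ring
  exact Tendsto.congr (fun h => (key2 h).symm) (first.mul_const (σ ^ 2))
end

section
/- (First-order asymptotics of the bias summand.) Fix x ∈ ℝ^d and a coordinate j. Under the data-model smoothness assumptions (p continuously differentiable with bounded gradient; f^(j) twice continuously differentiable with bounded gradient and bounded Hessian), and with X distributed with density p, the bias summand b(x) := k_h(x − X)·(f^(j)(X) − f^(j)(x)) satisfies lim_{h→0⁺} h^(−2)·E[b(x)] = μ₂(k)·Ψ^(j)(x), where Ψ^(j)(x) := (1/2)·p(x)·tr(∇²f^(j)(x)) + ∇f^(j)(x)ᵀ∇p(x). -/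
open MeasureTheory ProbabilityTheory Filter Topology

/-- Trace of the Hessian `tr(∇²g(x)) = ∑ i ∂²g/∂xᵢ²(x)`. -/
noncomputable def hessTrace (d : ℕ) (g : (Fin d → ℝ) → ℝ) (x : Fin d → ℝ) : ℝ :=
  ∑ i, fderiv ℝ (fun y => fderiv ℝ g y (Pi.single i 1)) x (Pi.single i 1)

/-- Inner product of gradients `∇g(x)ᵀ∇p(x) = ∑ i ∂g/∂xᵢ(x) ∂p/∂xᵢ(x)`. -/
noncomputable def gradDot (d : ℕ) (g q : (Fin d → ℝ) → ℝ) (x : Fin d → ℝ) : ℝ :=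
  ∑ i, fderiv ℝ g x (Pi.single i 1) * fderiv ℝ q x (Pi.single i 1)

/-- `Ψ^(j)(x) = (1/2) p(x) tr(∇²f^(j)(x)) + ∇f^(j)(x)ᵀ∇p(x)`. -/
noncomputable def PsiComp (d : ℕ) (p fj : (Fin d → ℝ) → ℝ) (x : Fin d → ℝ) : ℝ :=
  (1 / 2) * p x * hessTrace d fj x + gradDot d fj p x

/- ### Auxiliary lemmas -/

lemma hasDerivAt_comp_line {E F : Type*} [NormedAddCommGroup E] [NormedSpace ℝ E]
    [NormedAddCommGroup F] [NormedSpace ℝ F]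
    {g : E → F} (hg : Differentiable ℝ g) (x u : E) (t : ℝ) :
    HasDerivAt (fun s : ℝ => g (x - s • u)) (-(fderiv ℝ g (x - t • u)) u) t := by
  have h1 : HasDerivAt (fun s : ℝ => x - s • u) (-u) t := by
    simpa using ((hasDerivAt_id t).smul_const u).const_sub x
  simpa [Function.comp_def] using ((hg (x - t • u)).hasFDerivAt.comp_hasDerivAt t h1)

lemma norm_sub_le_of_hasDerivAt {F : Type*} [NormedAddCommGroup F] [NormedSpace ℝ F]
    {f f' : ℝ → F} {C h : ℝ} (hh : 0 ≤ h)
    (hf : ∀ t, HasDerivAt f (f' t) t) (hb : ∀ t ∈ Set.Icc 0 h, ‖f' t‖ ≤ C) :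
    ‖f h - f 0‖ ≤ C * h := by
  have := norm_image_sub_le_of_norm_deriv_le_segment' (a := 0) (b := h)
    (fun t _ => (hf t).hasDerivWithinAt)
    (fun t ht => hb t (Set.Ico_subset_Icc_self ht)) h (Set.right_mem_Icc.2 hh)
  simpa using this

lemma norm_sub_le_of_hasDerivAt_Icc {F : Type*} [NormedAddCommGroup F] [NormedSpace ℝ F]
    {f f' : ℝ → F} {C h t : ℝ} (ht : t ∈ Set.Icc 0 h)
    (hf : ∀ s, HasDerivAt f (f' s) s) (hb : ∀ s ∈ Set.Icc 0 h, ‖f' s‖ ≤ C) :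
    ‖f t - f 0‖ ≤ C * t := by
  have := norm_image_sub_le_of_norm_deriv_le_segment' (a := 0) (b := h)
    (fun s _ => (hf s).hasDerivWithinAt)
    (fun s hs => hb s (Set.Ico_subset_Icc_self hs)) t ht
  simpa using this

lemma clm_sum_apply' {d : ℕ} (T : (Fin d → ℝ) →L[ℝ] ℝ) (u : Fin d → ℝ) :
    T u = ∑ i, u i * T (Pi.single i 1) := by
  have hu : u = ∑ i, u i • (Pi.single i 1 : Fin d → ℝ) := by
    ext j
    simp [Finset.sum_apply, Pi.single_apply]
  conv_lhs => rw [hu]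
  simp [smul_eq_mul]

lemma core_bound {Cf CH Cp h a P px Lu nu M : ℝ}
    (hh : 0 < h) (hP : 0 ≤ P) (hpx : 0 ≤ px) (hnu : 0 ≤ nu)
    (hCf : 0 ≤ Cf) (hCp : 0 ≤ Cp)
    (e1 : |a| ≤ Cf * (nu * h)) (e2 : |a + h * Lu| ≤ CH * nu ^ 2 * h ^ 2)
    (e3 : |P - px| ≤ Cp * (nu * h)) (eL : |Lu| ≤ Cf * nu)
    (hMdef : M = CH * px + 3 * (Cf * Cp)) :
    |(h ^ 2)⁻¹ * ((a + h * Lu) * P) - h⁻¹ * (Lu * (P - px))| ≤ M * nu ^ 2 := by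
  have hne : h ≠ 0 := ne_of_gt hh
  have t1 : |(h ^ 2)⁻¹ * ((a + h * Lu) * P)| ≤ (CH * px + 2 * (Cf * Cp)) * nu ^ 2 := by
    rw [abs_mul, abs_of_pos (show (0:ℝ) < (h ^ 2)⁻¹ by positivity)]
    have hPle : P ≤ px + Cp * (nu * h) := by
      have := le_abs_self (P - px); linarith
    have e2' : |a + h * Lu| ≤ 2 * Cf * (nu * h) := by
      have hb : |h * Lu| ≤ Cf * (nu * h) := by
        rw [abs_mul, abs_of_pos hh]
        calc h * |Lu| ≤ h * (Cf * nu) := mul_le_mul_of_nonneg_left eL hh.le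
          _ = Cf * (nu * h) := by ring
      calc |a + h * Lu| ≤ |a| + |h * Lu| := abs_add_le _ _
        _ ≤ Cf * (nu * h) + Cf * (nu * h) := add_le_add e1 hb
        _ = 2 * Cf * (nu * h) := by ring
    have hXP : |(a + h * Lu) * P| ≤ (CH * px + 2 * (Cf * Cp)) * nu ^ 2 * h ^ 2 := by
      rw [abs_mul, abs_of_nonneg hP]
      calc |a + h * Lu| * P ≤ |a + h * Lu| * (px + Cp * (nu * h)) :=
            mul_le_mul_of_nonneg_left hPle (abs_nonneg _)
        _ = |a + h * Lu| * px + |a + h * Lu| * (Cp * (nu * h)) := by ring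
        _ ≤ CH * nu ^ 2 * h ^ 2 * px + 2 * Cf * (nu * h) * (Cp * (nu * h)) :=
            add_le_add (mul_le_mul_of_nonneg_right e2 hpx)
              (mul_le_mul_of_nonneg_right e2' (by positivity))
        _ = (CH * px + 2 * (Cf * Cp)) * nu ^ 2 * h ^ 2 := by ring
    calc (h ^ 2)⁻¹ * |(a + h * Lu) * P|
        ≤ (h ^ 2)⁻¹ * ((CH * px + 2 * (Cf * Cp)) * nu ^ 2 * h ^ 2) :=
          mul_le_mul_of_nonneg_left hXP (by positivity)
      _ = (CH * px + 2 * (Cf * Cp)) * nu ^ 2 := by field_simp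
  have t2 : |h⁻¹ * (Lu * (P - px))| ≤ Cf * Cp * nu ^ 2 := by
    rw [abs_mul, abs_of_pos (show (0:ℝ) < h⁻¹ by positivity), abs_mul]
    calc h⁻¹ * (|Lu| * |P - px|) ≤ h⁻¹ * (Cf * nu * (Cp * (nu * h))) := by
          apply mul_le_mul_of_nonneg_left _ (by positivity)
          exact mul_le_mul eL e3 (abs_nonneg _) (by positivity)
      _ = Cf * Cp * nu ^ 2 := by field_simp
  calc |(h ^ 2)⁻¹ * ((a + h * Lu) * P) - h⁻¹ * (Lu * (P - px))|
      ≤ |(h ^ 2)⁻¹ * ((a + h * Lu) * P)| + |h⁻¹ * (Lu * (P - px))| := abs_sub _ _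
    _ ≤ (CH * px + 2 * (Cf * Cp)) * nu ^ 2 + Cf * Cp * nu ^ 2 := add_le_add t1 t2
    _ = M * nu ^ 2 := by rw [hMdef]; ring

set_option maxHeartbeats 1000000 in
/-- (First-order asymptotics of the bias summand.) Fix `x` and a coordinate `j`. Under the
data-model smoothness assumptions, with `X` distributed with density `p`, the bias summand
`b(x) := k_h(x − X)(f^(j)(X) − f^(j)(x))` satisfies
`h⁻² E[b(x)] → μ₂(k) Ψ^(j)(x)` as `h → 0⁺`. -/
theorem bias_summand_first_order
    (d : ℕ) (hd : 1 ≤ d)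
    (k : (Fin d → ℝ) → ℝ)
    (hk_meas : Measurable k)
    (hk_nonneg : ∀ u, 0 ≤ k u)
    (hk_bdd : ∃ C, ∀ u, k u ≤ C)
    (hk_symm : ∀ u, k (-u) = k u)
    (hk_int : Integrable k volume)
    (hk_int_one : (∫ u, k u) = 1)
    (hk_mom1_int : ∀ i, Integrable (fun u => u i * k u) volume)
    (hk_mom1 : ∀ i, (∫ u, u i * k u) = 0)
    (μ₂ : ℝ)
    (hk_mom2_int : ∀ i j, Integrable (fun u => u i * u j * k u) volume)
    (hk_mom2 : ∀ i j : Fin d, (∫ u, u i * u j * k u) = if i = j then μ₂ else 0)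
    (R : ℝ)
    (hk_sq_int : Integrable (fun u => (k u) ^ 2) volume)
    (hk_R : (∫ u, (k u) ^ 2) = R)
    -- random vector `X` with density `p`
    (Ω : Type*) [MeasureSpace Ω] [IsProbabilityMeasure (ℙ : Measure Ω)]
    (X : Ω → (Fin d → ℝ)) (hX_meas : Measurable X)
    (p : (Fin d → ℝ) → ℝ) (hp_nonneg : ∀ y, 0 ≤ p y)
    (hX_law : Measure.map X ℙ = volume.withDensity (fun y => ENNReal.ofReal (p y)))
    -- smoothness assumptions (paper's Assumption 2)
    (hp_smooth : ContDiff ℝ 1 p)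
    (hp_grad_bdd : ∃ C, ∀ y, ‖fderiv ℝ p y‖ ≤ C)
    (fj : (Fin d → ℝ) → ℝ)
    (hfj_smooth : ContDiff ℝ 2 fj)
    (hfj_grad_bdd : ∃ C, ∀ y, ‖fderiv ℝ fj y‖ ≤ C)
    (hfj_hess_bdd : ∃ C, ∀ y, ‖fderiv ℝ (fderiv ℝ fj) y‖ ≤ C)
    (x : Fin d → ℝ) :
    Tendsto
      (fun h : ℝ =>
        (h ^ 2)⁻¹ * ∫ ω, rescaledKernel d k h (x - X ω) * (fj (X ω) - fj x) ∂ℙ)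
      (𝓝[>] (0 : ℝ)) (𝓝 (μ₂ * PsiComp d p fj x)) := by
  classical
  obtain ⟨Cf, hCf⟩ := hfj_grad_bdd
  obtain ⟨CH, hCH⟩ := hfj_hess_bdd
  obtain ⟨Cp, hCp⟩ := hp_grad_bdd
  have hCf0 : 0 ≤ Cf := le_trans (norm_nonneg _) (hCf x)
  have hCH0 : 0 ≤ CH := le_trans (ContinuousLinearMap.opNorm_nonneg _) (hCH x)
  have hCp0 : 0 ≤ Cp := le_trans (norm_nonneg _) (hCp x)
  have hfj_diff : Differentiable ℝ fj := hfj_smooth.differentiable (by norm_num)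
  have hp_diff : Differentiable ℝ p := hp_smooth.differentiable (by norm_num)
  have hfj1 : ContDiff ℝ 1 (fun y => fderiv ℝ fj y) := hfj_smooth.fderiv_right (by norm_num)
  have hfj1_diff : Differentiable ℝ (fun y => fderiv ℝ fj y) := hfj1.differentiable (by norm_num)
  have hH2cont : Continuous (fderiv ℝ (fderiv ℝ fj)) := hfj1.continuous_fderiv (by norm_num)
  set F : ℝ → (Fin d → ℝ) → ℝ := fun h u =>
    k u * ((h ^ 2)⁻¹ * ((fj (x - h • u) - fj x + h * (fderiv ℝ fj x) u) * p (x - h • u))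
      - h⁻¹ * ((fderiv ℝ fj x) u * (p (x - h • u) - p x))) with hF
  set M : ℝ := CH * p x + 3 * (Cf * Cp) with hM
  have hM0 : 0 ≤ M := by
    have h1 := mul_nonneg hCf0 hCp0
    have h2 := mul_nonneg hCH0 (hp_nonneg x)
    rw [hM]; linarith
  -- mean value estimates
  have Egen : ∀ (g : (Fin d → ℝ) → ℝ) (C : ℝ), Differentiable ℝ g →
      (∀ y, ‖fderiv ℝ g y‖ ≤ C) →
      ∀ (h : ℝ) (u : Fin d → ℝ), 0 ≤ h → |g (x - h • u) - g x| ≤ C * (‖u‖ * h) := by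
    intro g C hg hC h u hh
    have h2 : ‖(x - h • u) - x‖ = ‖u‖ * h := by
      rw [sub_sub_cancel_left, norm_neg, norm_smul, Real.norm_eq_abs, abs_of_nonneg hh, mul_comm]
    have := convex_univ.norm_image_sub_le_of_norm_fderiv_le (f := g) (C := C)
      (fun y _ => hg y) (fun y _ => hC y) (Set.mem_univ x)
      (Set.mem_univ (x - h • u))
    calc |g (x - h • u) - g x| ≤ C * ‖(x - h • u) - x‖ := this
      _ = C * (‖u‖ * h) := by rw [h2]
  have E1 := Egen fj Cf hfj_diff hCf
  have E3 := Egen p Cp hp_diff hCp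
  have ElipL : ∀ y, ‖fderiv ℝ fj y - fderiv ℝ fj x‖ ≤ CH * ‖y - x‖ := fun y =>
    convex_univ.norm_image_sub_le_of_norm_fderiv_le (f := fun y => fderiv ℝ fj y)
      (C := CH) (fun z _ => hfj1_diff z) (fun z _ => hCH z)
      (Set.mem_univ x) (Set.mem_univ y)
  have E2 : ∀ (h : ℝ) (u : Fin d → ℝ), 0 ≤ h →
      |fj (x - h • u) - fj x + h * (fderiv ℝ fj x) u| ≤ CH * ‖u‖ ^ 2 * h ^ 2 := by
    intro h u hh
    have hder : ∀ t : ℝ, HasDerivAt (fun s : ℝ => fj (x - s • u) + s * (fderiv ℝ fj x) u)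
        (-(fderiv ℝ fj (x - t • u)) u + (fderiv ℝ fj x) u) t := fun t =>
      (hasDerivAt_comp_line hfj_diff x u t).add (hasDerivAt_mul_const _)
    have hb : ∀ t ∈ Set.Icc (0:ℝ) h,
        ‖-(fderiv ℝ fj (x - t • u)) u + (fderiv ℝ fj x) u‖ ≤ CH * ‖u‖ ^ 2 * h := by
      intro t ht
      have h1 : -(fderiv ℝ fj (x - t • u)) u + (fderiv ℝ fj x) u
          = (fderiv ℝ fj x - fderiv ℝ fj (x - t • u)) u := by
        rw [ContinuousLinearMap.sub_apply]; ring
      rw [h1]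
      have hsm : ‖(x - t • u) - x‖ = t * ‖u‖ := by
        rw [sub_sub_cancel_left, norm_neg, norm_smul, Real.norm_eq_abs, abs_of_nonneg ht.1]
      calc ‖(fderiv ℝ fj x - fderiv ℝ fj (x - t • u)) u‖
          ≤ ‖fderiv ℝ fj x - fderiv ℝ fj (x - t • u)‖ * ‖u‖ :=
            ContinuousLinearMap.le_opNorm _ u
        _ ≤ CH * ‖(x - t • u) - x‖ * ‖u‖ := by
            apply mul_le_mul_of_nonneg_right _ (norm_nonneg u)
            rw [norm_sub_rev]; exact ElipL _
        _ = CH * (t * ‖u‖) * ‖u‖ := by rw [hsm]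
        _ ≤ CH * (h * ‖u‖) * ‖u‖ := by
            apply mul_le_mul_of_nonneg_right _ (norm_nonneg u)
            exact mul_le_mul_of_nonneg_left
              (mul_le_mul_of_nonneg_right ht.2 (norm_nonneg u)) hCH0
        _ = CH * ‖u‖ ^ 2 * h := by ring
    have := norm_sub_le_of_hasDerivAt hh hder hb
    simp only [zero_smul, sub_zero, zero_mul, add_zero, Real.norm_eq_abs] at this
    calc |fj (x - h • u) - fj x + h * (fderiv ℝ fj x) u|
        = |fj (x - h • u) + h * (fderiv ℝ fj x) u - fj x| := by ring_nf
      _ ≤ CH * ‖u‖ ^ 2 * h * h := this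
      _ = CH * ‖u‖ ^ 2 * h ^ 2 := by ring
  have hnormsq : ∀ u : Fin d → ℝ, ‖u‖ ^ 2 ≤ ∑ i, (u i) ^ 2 := by
    intro u
    have h1 : ‖u‖ ≤ Real.sqrt (∑ i, (u i) ^ 2) := by
      apply (pi_norm_le_iff_of_nonneg (Real.sqrt_nonneg _)).2
      intro i
      rw [Real.norm_eq_abs, ← Real.sqrt_sq_eq_abs]
      apply Real.sqrt_le_sqrt
      exact Finset.single_le_sum (fun j _ => sq_nonneg (u j)) (Finset.mem_univ i)
    calc ‖u‖ ^ 2 ≤ Real.sqrt (∑ i, (u i) ^ 2) ^ 2 :=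
          pow_le_pow_left₀ (norm_nonneg u) h1 2
      _ = ∑ i, (u i) ^ 2 := Real.sq_sqrt (by positivity)
  set bnd : (Fin d → ℝ) → ℝ := fun u => M * ((∑ i, (u i) ^ 2) * k u) with hbnd
  have hFbound : ∀ (h : ℝ), 0 < h → ∀ u : Fin d → ℝ, |F h u| ≤ bnd u := by
    intro h hh u
    have eL : |(fderiv ℝ fj x) u| ≤ Cf * ‖u‖ := by
      calc |(fderiv ℝ fj x) u| ≤ ‖fderiv ℝ fj x‖ * ‖u‖ :=
            (fderiv ℝ fj x).le_opNorm u
        _ ≤ Cf * ‖u‖ := mul_le_mul_of_nonneg_right (hCf x) (norm_nonneg u)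
    have hz := core_bound (a := fj (x - h • u) - fj x) (P := p (x - h • u)) (px := p x)
      (Lu := (fderiv ℝ fj x) u) (nu := ‖u‖) hh (hp_nonneg _) (hp_nonneg x) (norm_nonneg u)
      hCf0 hCp0 (E1 h u hh.le) (E2 h u hh.le) (E3 h u hh.le) eL hM
    have habs : |F h u| = k u * |(h ^ 2)⁻¹ * ((fj (x - h • u) - fj x
        + h * (fderiv ℝ fj x) u) * p (x - h • u))
        - h⁻¹ * ((fderiv ℝ fj x) u * (p (x - h • u) - p x))| := by
      rw [hF]
      rw [abs_mul, abs_of_nonneg (hk_nonneg u)]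
    rw [habs, hbnd]
    calc k u * |(h ^ 2)⁻¹ * ((fj (x - h • u) - fj x + h * (fderiv ℝ fj x) u) * p (x - h • u))
          - h⁻¹ * ((fderiv ℝ fj x) u * (p (x - h • u) - p x))|
        ≤ k u * (M * ‖u‖ ^ 2) := mul_le_mul_of_nonneg_left hz (hk_nonneg u)
      _ ≤ k u * (M * (∑ i, (u i) ^ 2)) := by
          apply mul_le_mul_of_nonneg_left _ (hk_nonneg u)
          exact mul_le_mul_of_nonneg_left (hnormsq u) hM0
      _ = M * ((∑ i, (u i) ^ 2) * k u) := by ring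
  -- measurability and integrability
  have hF_meas : ∀ h : ℝ, AEStronglyMeasurable (F h) volume := by
    intro h
    rw [hF]
    apply (hk_meas.aestronglyMeasurable.mul ?_)
    apply Continuous.aestronglyMeasurable
    have hc0 : Continuous fun u : Fin d → ℝ => x - h • u :=
      continuous_const.sub (continuous_id.const_smul h)
    have hc1 : Continuous fun u : Fin d → ℝ => fj (x - h • u) :=
      hfj_smooth.continuous.comp hc0
    have hc2 : Continuous fun u : Fin d → ℝ => p (x - h • u) :=
      hp_smooth.continuous.comp hc0
    have hc3 : Continuous fun u : Fin d → ℝ => (fderiv ℝ fj x) u :=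
      (fderiv ℝ fj x).continuous
    exact (continuous_const.mul (((hc1.sub continuous_const).add
      (continuous_const.mul hc3)).mul hc2)).sub
      (continuous_const.mul (hc3.mul (hc2.sub continuous_const)))
  have hsq_int : Integrable (fun u : Fin d → ℝ => (∑ i, (u i) ^ 2) * k u) := by
    have heq : (fun u : Fin d → ℝ => (∑ i, (u i) ^ 2) * k u)
        = fun u => ∑ i, u i * u i * k u := by
      funext u; rw [Finset.sum_mul]
      exact Finset.sum_congr rfl fun i _ => by ring
    rw [heq]
    exact integrable_finset_sum _ fun i _ => hk_mom2_int i i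
  have hInt_bnd : Integrable bnd := by rw [hbnd]; exact hsq_int.const_mul M
  have hF_int : ∀ h : ℝ, 0 < h → Integrable (F h) := by
    intro h hh
    apply Integrable.mono' hInt_bnd (hF_meas h)
    exact ae_of_all _ fun u => by
      rw [Real.norm_eq_abs]; exact hFbound h hh u
  have hLkEq : (fun u : Fin d → ℝ => (fderiv ℝ fj x) u * k u)
      = fun u => ∑ i, (fderiv ℝ fj x) (Pi.single i 1) * (u i * k u) := by
    funext u
    rw [clm_sum_apply' (fderiv ℝ fj x) u, Finset.sum_mul]
    exact Finset.sum_congr rfl fun i _ => by ring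
  have hLk_int : Integrable (fun u : Fin d → ℝ => (fderiv ℝ fj x) u * k u) := by
    rw [hLkEq]
    exact integrable_finset_sum _ fun i _ => (hk_mom1_int i).const_mul _
  have hLk_zero : (∫ u : Fin d → ℝ, (fderiv ℝ fj x) u * k u) = 0 := by
    rw [hLkEq, integral_finset_sum _ fun i _ => (hk_mom1_int i).const_mul _]
    simp [integral_const_mul, hk_mom1]
  -- change of variables: expectation as integral over the kernel variable
  have hkd : ∀ h : ℝ, 0 < h →
      (∫ ω, rescaledKernel d k h (x - X ω) * (fj (X ω) - fj x) ∂ℙ)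
      = ∫ u : Fin d → ℝ, k u * ((fj (x - h • u) - fj x) * p (x - h • u)) := by
    intro h hh
    have hne : h ≠ 0 := ne_of_gt hh
    have hb_meas : Measurable fun y : Fin d → ℝ =>
        rescaledKernel d k h (x - y) * (fj y - fj x) := by
      apply Measurable.mul
      · simp only [rescaledKernel]
        exact (hk_meas.comp
          ((measurable_const.sub measurable_id).const_smul h⁻¹)).const_mul _
      · exact (hfj_smooth.continuous.measurable).sub measurable_const
    have s1 : (∫ ω, rescaledKernel d k h (x - X ω) * (fj (X ω) - fj x) ∂ℙ)
        = ∫ y, rescaledKernel d k h (x - y) * (fj y - fj x) ∂(Measure.map X ℙ) :=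
      (integral_map hX_meas.aemeasurable hb_meas.aestronglyMeasurable).symm
    rw [s1, hX_law]
    have htoNN : Measurable fun y : Fin d → ℝ => (p y).toNNReal :=
      measurable_real_toNNReal.comp hp_smooth.continuous.measurable
    have hmeq : (volume.withDensity fun y : Fin d → ℝ => ENNReal.ofReal (p y))
        = volume.withDensity fun y => ((p y).toNNReal : ENNReal) := rfl
    rw [hmeq, integral_withDensity_eq_integral_smul htoNN]
    have s2 : (fun y : Fin d → ℝ =>
        (p y).toNNReal • (rescaledKernel d k h (x - y) * (fj y - fj x)))
        = fun y => (fun z => p (x - z) * (rescaledKernel d k h z * (fj (x - z) - fj x)))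
            (x - y) := by
      funext y
      simp [NNReal.smul_def, Real.coe_toNNReal _ (hp_nonneg y), sub_sub_cancel]
    rw [s2]
    have s3 : (∫ y : Fin d → ℝ,
        (fun z => p (x - z) * (rescaledKernel d k h z * (fj (x - z) - fj x))) (x - y))
        = ∫ z : Fin d → ℝ, p (x - z) * (rescaledKernel d k h z * (fj (x - z) - fj x)) :=
      (Measure.measurePreserving_sub_left (volume : Measure (Fin d → ℝ)) x).integral_comp
        (MeasurableEquiv.subLeft x).measurableEmbedding
        (fun z => p (x - z) * (rescaledKernel d k h z * (fj (x - z) - fj x)))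
    rw [s3]
    -- now scaling z = h • u
    have hint := Measure.integral_comp_smul_of_nonneg (μ := (volume : Measure (Fin d → ℝ)))
      (fun z => p (x - z) * (rescaledKernel d k h z * (fj (x - z) - fj x))) h (hR := hh.le)
    have hrank : Module.finrank ℝ (Fin d → ℝ) = d := by
      simp [Module.finrank_fintype_fun_eq_card]
    rw [hrank] at hint
    have hsim : (fun u : Fin d → ℝ =>
        (fun z => p (x - z) * (rescaledKernel d k h z * (fj (x - z) - fj x))) (h • u))
        = fun u => (h ^ d)⁻¹ * (k u * ((fj (x - h • u) - fj x) * p (x - h • u))) := by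
      funext u
      have hsm : h⁻¹ • (h • u) = u := by
        rw [smul_smul, inv_mul_cancel₀ hne, one_smul]
      simp only [rescaledKernel, hsm]
      ring
    rw [hsim, integral_const_mul, smul_eq_mul] at hint
    have hpd : ((h : ℝ) ^ d)⁻¹ ≠ 0 := by positivity
    exact (mul_left_cancel₀ hpd hint).symm
  -- rewrite the normalized expectation as the integral of `F h`
  have keyF : ∀ h : ℝ, 0 < h →
      (h ^ 2)⁻¹ * (∫ ω, rescaledKernel d k h (x - X ω) * (fj (X ω) - fj x) ∂ℙ)
      = ∫ u : Fin d → ℝ, F h u := by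
    intro h hh
    have hne : h ≠ 0 := ne_of_gt hh
    rw [hkd h hh, ← integral_const_mul]
    have hpt : (fun u : Fin d → ℝ =>
        (h ^ 2)⁻¹ * (k u * ((fj (x - h • u) - fj x) * p (x - h • u))))
        = fun u => F h u - (h⁻¹ * p x) * ((fderiv ℝ fj x) u * k u) := by
      funext u
      rw [hF]
      field_simp
      ring
    rw [hpt, integral_sub (hF_int h hh) (hLk_int.const_mul _), integral_const_mul,
      hLk_zero, mul_zero, sub_zero]
  -- pointwise limits
  have hptwise : ∀ u : Fin d → ℝ, Tendsto (fun h : ℝ => F h u) (𝓝[>] (0:ℝ))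
      (𝓝 (k u * ((1/2) * ((fderiv ℝ (fderiv ℝ fj) x) u u) * p x
        + (fderiv ℝ fj x) u * (fderiv ℝ p x) u))) := by
    intro u
    have tendP : Tendsto (fun h : ℝ => p (x - h • u)) (𝓝[>] (0:ℝ)) (𝓝 (p x)) := by
      have hc : Continuous fun h : ℝ => p (x - h • u) :=
        hp_smooth.continuous.comp (continuous_const.sub (continuous_id.smul continuous_const))
      have h0 := hc.tendsto 0
      simp only [zero_smul, sub_zero] at h0
      exact h0.mono_left nhdsWithin_le_nhds
    have hq : HasDerivAt (fun t : ℝ => p (x - t • u)) (-(fderiv ℝ p x) u) 0 := by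
      have := hasDerivAt_comp_line hp_diff x u 0
      simpa using this
    have tendSlope := (hasDerivAt_iff_tendsto_slope.mp hq).mono_left
      (nhdsWithin_mono (0:ℝ) (fun y (hy : y ∈ Set.Ioi (0:ℝ)) =>
        Set.mem_compl_singleton_iff.mpr (ne_of_gt hy)))
    have tendB : Tendsto (fun h : ℝ => h⁻¹ * ((fderiv ℝ fj x) u * (p (x - h • u) - p x)))
        (𝓝[>] (0:ℝ)) (𝓝 ((fderiv ℝ fj x) u * -((fderiv ℝ p x) u))) := by
      have heq : ∀ h : ℝ, (fderiv ℝ fj x) u * slope (fun t : ℝ => p (x - t • u)) 0 h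
          = h⁻¹ * ((fderiv ℝ fj x) u * (p (x - h • u) - p x)) := by
        intro h
        rw [slope_def_field]
        simp only [zero_smul, sub_zero]
        ring
      exact Tendsto.congr heq (tendSlope.const_mul _)
    have tendA : Tendsto (fun h : ℝ => (h ^ 2)⁻¹ *
        (fj (x - h • u) - fj x + h * (fderiv ℝ fj x) u)) (𝓝[>] (0:ℝ))
        (𝓝 ((1/2) * ((fderiv ℝ (fderiv ℝ fj) x) u u))) := by
      rw [Metric.tendsto_nhdsWithin_nhds]
      intro ε hε
      have hcont : ContinuousAt (fderiv ℝ (fderiv ℝ fj)) x := hH2cont.continuousAt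
      obtain ⟨ρ, hρpos, hρ⟩ := (Metric.continuousAt_iff (f := fderiv ℝ (fderiv ℝ fj)) (a := x)).mp hcont (ε / (‖u‖ ^ 2 + 1))
        (by positivity)
      refine ⟨ρ / (‖u‖ + 1), by positivity, ?_⟩
      intro h hh hhδ
      have hh0 : (0:ℝ) < h := hh
      have hne : h ≠ 0 := ne_of_gt hh0
      have hhδ' : h < ρ / (‖u‖ + 1) := by
        rwa [Real.dist_eq, sub_zero, abs_of_pos hh0] at hhδ
      have hhρ : h * (‖u‖ + 1) < ρ := (lt_div_iff₀ (by positivity)).mp hhδ'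
      have hdist : ∀ t ∈ Set.Icc (0:ℝ) h, dist (x - t • u) x < ρ := by
        intro t ht
        rw [dist_eq_norm, sub_sub_cancel_left, norm_neg, norm_smul, Real.norm_eq_abs,
          abs_of_nonneg ht.1]
        have h1 : t * ‖u‖ ≤ h * ‖u‖ := mul_le_mul_of_nonneg_right ht.2 (norm_nonneg u)
        nlinarith [norm_nonneg u]
      have hH2close : ∀ t ∈ Set.Icc (0:ℝ) h,
          ‖fderiv ℝ (fderiv ℝ fj) x - fderiv ℝ (fderiv ℝ fj) (x - t • u)‖
          ≤ ε / (‖u‖ ^ 2 + 1) := by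
        intro t ht
        have hcl := hρ (hdist t ht)
        exact (lt_of_eq_of_lt ((norm_sub_rev (fderiv ℝ (fderiv ℝ fj) x)
          (fderiv ℝ (fderiv ℝ fj) (x - t • u))).trans
          (dist_eq_norm (fderiv ℝ (fderiv ℝ fj) (x - t • u)) (fderiv ℝ (fderiv ℝ fj) x)).symm) hcl).le
      have hn : ∀ t : ℝ, HasDerivAt
          (fun s : ℝ => fderiv ℝ fj (x - s • u) + s • ((fderiv ℝ (fderiv ℝ fj) x) u))
          (-(fderiv ℝ (fderiv ℝ fj) (x - t • u)) u + (fderiv ℝ (fderiv ℝ fj) x) u) t := by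
        intro t
        have h1 := hasDerivAt_comp_line hfj1_diff x u t
        have h2 : HasDerivAt (fun s : ℝ => s • ((fderiv ℝ (fderiv ℝ fj) x) u))
            ((fderiv ℝ (fderiv ℝ fj) x) u) t := by
          simpa using (hasDerivAt_id t).smul_const ((fderiv ℝ (fderiv ℝ fj) x) u)
        exact h1.add h2
      have hnb : ∀ t ∈ Set.Icc (0:ℝ) h,
          ‖-(fderiv ℝ (fderiv ℝ fj) (x - t • u)) u + (fderiv ℝ (fderiv ℝ fj) x) u‖
          ≤ ε / (‖u‖ ^ 2 + 1) * ‖u‖ := by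
        intro t ht
        have h1 : -(fderiv ℝ (fderiv ℝ fj) (x - t • u)) u + (fderiv ℝ (fderiv ℝ fj) x) u
            = (fderiv ℝ (fderiv ℝ fj) x - fderiv ℝ (fderiv ℝ fj) (x - t • u)) u := by
          rw [ContinuousLinearMap.sub_apply]; abel
        rw [h1]
        calc ‖(fderiv ℝ (fderiv ℝ fj) x - fderiv ℝ (fderiv ℝ fj) (x - t • u)) u‖
            ≤ ‖fderiv ℝ (fderiv ℝ fj) x - fderiv ℝ (fderiv ℝ fj) (x - t • u)‖ * ‖u‖ :=
              ContinuousLinearMap.le_opNorm _ u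
          _ ≤ ε / (‖u‖ ^ 2 + 1) * ‖u‖ :=
              mul_le_mul_of_nonneg_right (hH2close t ht) (norm_nonneg u)
      have hnineq : ∀ t ∈ Set.Icc (0:ℝ) h,
          ‖(fderiv ℝ fj (x - t • u) + t • ((fderiv ℝ (fderiv ℝ fj) x) u))
            - (fderiv ℝ fj (x - (0:ℝ) • u) + (0:ℝ) • ((fderiv ℝ (fderiv ℝ fj) x) u))‖
          ≤ ε / (‖u‖ ^ 2 + 1) * ‖u‖ * t := fun t ht =>
        norm_sub_le_of_hasDerivAt_Icc ht hn hnb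
      have hv : ∀ t : ℝ, HasDerivAt (fun s : ℝ => fj (x - s • u) + s * (fderiv ℝ fj x) u
          - s ^ 2 * ((1/2) * (fderiv ℝ (fderiv ℝ fj) x) u u))
          (-(fderiv ℝ fj (x - t • u)) u + (fderiv ℝ fj x) u
            - ((2:ℕ) * t ^ 1) * ((1/2) * (fderiv ℝ (fderiv ℝ fj) x) u u)) t := by
        intro t
        exact ((hasDerivAt_comp_line hfj_diff x u t).add (hasDerivAt_mul_const _)).sub
          ((hasDerivAt_pow 2 t).mul_const _)
      have hvb : ∀ t ∈ Set.Icc (0:ℝ) h,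
          ‖-(fderiv ℝ fj (x - t • u)) u + (fderiv ℝ fj x) u
            - ((2:ℕ) * t ^ 1) * ((1/2) * (fderiv ℝ (fderiv ℝ fj) x) u u)‖
          ≤ ε / (‖u‖ ^ 2 + 1) * ‖u‖ ^ 2 * h := by
        intro t ht
        have heq : -(fderiv ℝ fj (x - t • u)) u + (fderiv ℝ fj x) u
            - ((2:ℕ) * t ^ 1) * ((1/2) * (fderiv ℝ (fderiv ℝ fj) x) u u)
            = -(((fderiv ℝ fj (x - t • u) + t • ((fderiv ℝ (fderiv ℝ fj) x) u))
              - (fderiv ℝ fj (x - (0:ℝ) • u) + (0:ℝ) • ((fderiv ℝ (fderiv ℝ fj) x) u))) u) := by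
          simp only [zero_smul, sub_zero, add_zero, ContinuousLinearMap.sub_apply,
            ContinuousLinearMap.add_apply, ContinuousLinearMap.smul_apply, smul_eq_mul]
          push_cast
          ring
        rw [heq, norm_neg]
        have hE0 : (0:ℝ) ≤ ε / (‖u‖ ^ 2 + 1) * ‖u‖ ^ 2 := by positivity
        calc ‖((fderiv ℝ fj (x - t • u) + t • ((fderiv ℝ (fderiv ℝ fj) x) u))
              - (fderiv ℝ fj (x - (0:ℝ) • u) + (0:ℝ) • ((fderiv ℝ (fderiv ℝ fj) x) u))) u‖
            ≤ ‖(fderiv ℝ fj (x - t • u) + t • ((fderiv ℝ (fderiv ℝ fj) x) u))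
              - (fderiv ℝ fj (x - (0:ℝ) • u) + (0:ℝ) • ((fderiv ℝ (fderiv ℝ fj) x) u))‖ * ‖u‖ :=
              ContinuousLinearMap.le_opNorm _ u
          _ ≤ (ε / (‖u‖ ^ 2 + 1) * ‖u‖ * t) * ‖u‖ :=
              mul_le_mul_of_nonneg_right (hnineq t ht) (norm_nonneg u)
          _ = (ε / (‖u‖ ^ 2 + 1) * ‖u‖ ^ 2) * t := by ring
          _ ≤ (ε / (‖u‖ ^ 2 + 1) * ‖u‖ ^ 2) * h := mul_le_mul_of_nonneg_left ht.2 hE0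
          _ = ε / (‖u‖ ^ 2 + 1) * ‖u‖ ^ 2 * h := by ring
      have hfinal := norm_sub_le_of_hasDerivAt hh0.le hv hvb
      simp only [zero_smul, sub_zero, zero_mul, add_zero, ne_eq, OfNat.ofNat_ne_zero,
        not_false_eq_true, zero_pow, Real.norm_eq_abs] at hfinal
      rw [Real.dist_eq]
      have heq2 : (h ^ 2)⁻¹ * (fj (x - h • u) - fj x + h * (fderiv ℝ fj x) u)
          - (1/2) * (fderiv ℝ (fderiv ℝ fj) x) u u
          = (h ^ 2)⁻¹ * (fj (x - h • u) + h * (fderiv ℝ fj x) u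
            - h ^ 2 * ((1/2) * (fderiv ℝ (fderiv ℝ fj) x) u u) - fj x) := by
        field_simp
        ring
      rw [heq2, abs_mul, abs_of_pos (show (0:ℝ) < (h ^ 2)⁻¹ by positivity)]
      calc (h ^ 2)⁻¹ * |fj (x - h • u) + h * (fderiv ℝ fj x) u
            - h ^ 2 * ((1/2) * (fderiv ℝ (fderiv ℝ fj) x) u u) - fj x|
          ≤ (h ^ 2)⁻¹ * (ε / (‖u‖ ^ 2 + 1) * ‖u‖ ^ 2 * h * h) :=
            mul_le_mul_of_nonneg_left hfinal (by positivity)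
        _ = ε / (‖u‖ ^ 2 + 1) * ‖u‖ ^ 2 := by field_simp
        _ < ε := by
            rw [div_mul_eq_mul_div, div_lt_iff₀ (by positivity)]
            nlinarith [sq_nonneg ‖u‖]
    have comb := ((tendA.mul tendP).sub tendB).const_mul (k u)
    have hval : k u * ((1/2) * ((fderiv ℝ (fderiv ℝ fj) x) u u) * p x
        - (fderiv ℝ fj x) u * -((fderiv ℝ p x) u))
        = k u * ((1/2) * ((fderiv ℝ (fderiv ℝ fj) x) u u) * p x
          + (fderiv ℝ fj x) u * (fderiv ℝ p x) u) := by ring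
    rw [hval] at comb
    refine comb.congr fun h => ?_
    simp only [hF]
    ring
  -- dominated convergence
  have main : Tendsto (fun h : ℝ => ∫ u : Fin d → ℝ, F h u) (𝓝[>] (0:ℝ))
      (𝓝 (∫ u : Fin d → ℝ, k u * ((1/2) * ((fderiv ℝ (fderiv ℝ fj) x) u u) * p x
        + (fderiv ℝ fj x) u * (fderiv ℝ p x) u))) := by
    apply tendsto_integral_filter_of_dominated_convergence bnd
    · exact Eventually.of_forall hF_meas
    · filter_upwards [self_mem_nhdsWithin] with h hh
      exact ae_of_all _ fun u => by rw [Real.norm_eq_abs]; exact hFbound h hh u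
    · exact hInt_bnd
    · exact ae_of_all _ hptwise
  -- computing the limit integral
  set Cc : Fin d → Fin d → ℝ := fun i j =>
    (1/2) * p x * (fderiv ℝ (fderiv ℝ fj) x) (Pi.single i 1) (Pi.single j 1)
      + (fderiv ℝ fj x) (Pi.single i 1) * (fderiv ℝ p x) (Pi.single j 1) with hCc
  have hHuu : ∀ u : Fin d → ℝ, (fderiv ℝ (fderiv ℝ fj) x) u u
      = ∑ i, ∑ j, u i * u j
        * (fderiv ℝ (fderiv ℝ fj) x) (Pi.single i 1) (Pi.single j 1) := by
    intro u
    have h1 : (fderiv ℝ (fderiv ℝ fj) x) u u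
        = ∑ j, u j * (fderiv ℝ (fderiv ℝ fj) x) u (Pi.single j 1) :=
      clm_sum_apply' ((fderiv ℝ (fderiv ℝ fj) x) u) u
    have h2 : ∀ j : Fin d, (fderiv ℝ (fderiv ℝ fj) x) u (Pi.single j 1)
        = ∑ i, u i * (fderiv ℝ (fderiv ℝ fj) x) (Pi.single i 1) (Pi.single j 1) := by
      intro j
      simpa [ContinuousLinearMap.flip_apply] using
        clm_sum_apply' ((fderiv ℝ (fderiv ℝ fj) x).flip (Pi.single j 1)) u
    rw [h1]
    simp only [h2, Finset.mul_sum]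
    rw [Finset.sum_comm]
    exact Finset.sum_congr rfl fun i _ => Finset.sum_congr rfl fun j _ => by ring
  have limEq : ∀ u : Fin d → ℝ, k u * ((1/2) * ((fderiv ℝ (fderiv ℝ fj) x) u u) * p x
      + (fderiv ℝ fj x) u * (fderiv ℝ p x) u)
      = ∑ i, ∑ j, Cc i j * (u i * u j * k u) := by
    intro u
    rw [hHuu u, clm_sum_apply' (fderiv ℝ fj x) u, clm_sum_apply' (fderiv ℝ p x) u,
      Finset.sum_mul_sum]
    simp only [hCc, mul_add, add_mul, Finset.mul_sum, Finset.sum_mul,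
      ← Finset.sum_add_distrib]
    exact Finset.sum_congr rfl fun i _ => Finset.sum_congr rfl fun j _ => by ring
  have int_cij : ∀ i j : Fin d, Integrable
      (fun u : Fin d → ℝ => Cc i j * (u i * u j * k u)) volume :=
    fun i j => (hk_mom2_int i j).const_mul _
  have hHdiag : ∀ v : Fin d → ℝ, fderiv ℝ (fun y => fderiv ℝ fj y v) x
      = (fderiv ℝ (fderiv ℝ fj) x).flip v := by
    intro v
    rw [fderiv_clm_apply (hfj1_diff x) (differentiableAt_const v)]
    simp
  have hfinal_int : (∫ u : Fin d → ℝ, k u * ((1/2) * ((fderiv ℝ (fderiv ℝ fj) x) u u) * p x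
      + (fderiv ℝ fj x) u * (fderiv ℝ p x) u)) = μ₂ * PsiComp d p fj x := by
    calc (∫ u : Fin d → ℝ, k u * ((1/2) * ((fderiv ℝ (fderiv ℝ fj) x) u u) * p x
          + (fderiv ℝ fj x) u * (fderiv ℝ p x) u))
        = ∫ u : Fin d → ℝ, ∑ i, ∑ j, Cc i j * (u i * u j * k u) :=
          integral_congr_ae (Filter.Eventually.of_forall limEq)
      _ = ∑ i, ∑ j, Cc i j * ∫ u : Fin d → ℝ, u i * u j * k u := by
          rw [integral_finset_sum _ fun i _ =>
            integrable_finset_sum _ fun j _ => int_cij i j]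
          refine Finset.sum_congr rfl fun i _ => ?_
          rw [integral_finset_sum _ fun j _ => int_cij i j]
          exact Finset.sum_congr rfl fun j _ => integral_const_mul _ _
      _ = ∑ i, Cc i i * μ₂ := by
          refine Finset.sum_congr rfl fun i _ => ?_
          rw [Finset.sum_eq_single i]
          · rw [hk_mom2 i i, if_pos rfl]
          · intro j _ hj
            rw [hk_mom2 i j, if_neg fun hij => hj hij.symm, mul_zero]
          · intro hi
            exact absurd (Finset.mem_univ i) hi
      _ = (∑ i, Cc i i) * μ₂ := (Finset.sum_mul _ _ _).symm
      _ = μ₂ * PsiComp d p fj x := by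
          have h1 : (∑ i, Cc i i) = PsiComp d p fj x := by
            rw [PsiComp, hessTrace, gradDot]
            simp only [hCc, hHdiag, ContinuousLinearMap.flip_apply]
            rw [Finset.sum_add_distrib, ← Finset.mul_sum]
          rw [h1, mul_comm]
  rw [hfinal_int] at main
  refine Tendsto.congr' ?_ main
  filter_upwards [self_mem_nhdsWithin] with h hh
  exact (keyF h hh).symm
end

section
/- (Second-moment bound on the bias summand.) Fix x ∈ ℝ^d and a coordinate j. Under the data-model smoothness assumptions (p bounded and continuously differentiable with bounded gradient; f^(j) twice continuously differentiable with bounded gradient and bounded Hessian), and with X distributed with density p, there exist constants C > 0 and h₀ > 0 such that for all 0 < h < h₀, the bias summand b(x) := k_h(x − X)·(f^(j)(X) − f^(j)(x)) satisfies E[b(x)²] ≤ C·h^(2−d). In particular, h^d·E[b(x)²] → 0 as h → 0⁺, so the second moment of b(x) is of strictly higher order than that of the noise summand (which scales like h^(−d)). -/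
open MeasureTheory ProbabilityTheory Filter Topology

/-- (Second-moment bound on the bias summand.) Fix `x` and a coordinate `j`. Under the
data-model smoothness assumptions, with `X` distributed with bounded density `p`, there exist
`C > 0` and `h₀ > 0` such that for all `0 < h < h₀` the bias summand
`b(x) := k_h(x − X)(f^(j)(X) − f^(j)(x))` satisfies `E[b(x)²] ≤ C h^(2−d)`.
In particular `h^d E[b(x)²] → 0` as `h → 0⁺`. -/
theorem bias_summand_second_moment
    (d : ℕ) (hd : 1 ≤ d)
    (k : (Fin d → ℝ) → ℝ)
    (hk_meas : Measurable k)
    (hk_nonneg : ∀ u, 0 ≤ k u)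
    (hk_bdd : ∃ C, ∀ u, k u ≤ C)
    (hk_symm : ∀ u, k (-u) = k u)
    (hk_int : Integrable k volume)
    (hk_int_one : (∫ u, k u) = 1)
    (hk_mom1_int : ∀ i, Integrable (fun u => u i * k u) volume)
    (hk_mom1 : ∀ i, (∫ u, u i * k u) = 0)
    (μ₂ : ℝ)
    (hk_mom2_int : ∀ i j, Integrable (fun u => u i * u j * k u) volume)
    (hk_mom2 : ∀ i j : Fin d, (∫ u, u i * u j * k u) = if i = j then μ₂ else 0)
    (R : ℝ)
    (hk_sq_int : Integrable (fun u => (k u) ^ 2) volume)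
    (hk_R : (∫ u, (k u) ^ 2) = R)
    -- random vector `X` with bounded density `p`
    (Ω : Type*) [MeasureSpace Ω] [IsProbabilityMeasure (ℙ : Measure Ω)]
    (X : Ω → (Fin d → ℝ)) (hX_meas : Measurable X)
    (p : (Fin d → ℝ) → ℝ) (hp_nonneg : ∀ y, 0 ≤ p y)
    (hp_bdd : ∃ C, ∀ y, p y ≤ C)
    (hX_law : Measure.map X ℙ = volume.withDensity (fun y => ENNReal.ofReal (p y)))
    -- smoothness assumptions (paper's Assumption 2)
    (hp_smooth : ContDiff ℝ 1 p)
    (hp_grad_bdd : ∃ C, ∀ y, ‖fderiv ℝ p y‖ ≤ C)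
    (fj : (Fin d → ℝ) → ℝ)
    (hfj_smooth : ContDiff ℝ 2 fj)
    (hfj_grad_bdd : ∃ C, ∀ y, ‖fderiv ℝ fj y‖ ≤ C)
    (hfj_hess_bdd : ∃ C, ∀ y, ‖fderiv ℝ (fderiv ℝ fj) y‖ ≤ C)
    (x : Fin d → ℝ) :
    (∃ C > (0 : ℝ), ∃ h₀ > (0 : ℝ), ∀ h : ℝ, 0 < h → h < h₀ →
      (∫ ω, (rescaledKernel d k h (x - X ω) * (fj (X ω) - fj x)) ^ 2 ∂ℙ)
        ≤ C * h ^ ((2 : ℤ) - (d : ℤ)))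
    ∧
    Tendsto
      (fun h : ℝ =>
        h ^ d * ∫ ω, (rescaledKernel d k h (x - X ω) * (fj (X ω) - fj x)) ^ 2 ∂ℙ)
      (𝓝[>] (0 : ℝ)) (𝓝 0) := by
  classical
  obtain ⟨Ck, hCk⟩ := hk_bdd
  obtain ⟨Cp, hCp⟩ := hp_bdd
  obtain ⟨L, hL⟩ := hfj_grad_bdd
  have hCk0 : 0 ≤ Ck := le_trans (hk_nonneg 0) (hCk 0)
  have hCp0 : 0 ≤ Cp := le_trans (hp_nonneg 0) (hCp 0)
  have hL0 : 0 ≤ L := le_trans (norm_nonneg _) (hL 0)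
  have hμ₂0 : 0 ≤ μ₂ := by
    have h2 := hk_mom2 ⟨0, hd⟩ ⟨0, hd⟩
    rw [if_pos rfl] at h2
    rw [← h2]
    exact integral_nonneg fun u => mul_nonneg (mul_self_nonneg _) (hk_nonneg u)
  -- Lipschitz bound on fj
  have hlip : ∀ y : Fin d → ℝ, |fj y - fj x| ≤ L * ‖y - x‖ := by
    intro y
    have := convex_univ.norm_image_sub_le_of_norm_fderiv_le
      (f := fj) (fun z _ => (hfj_smooth.differentiable (by norm_num)).differentiableAt)
      (fun z _ => hL z) (Set.mem_univ x) (Set.mem_univ y)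
    simpa [Real.norm_eq_abs] using this
  -- sup norm squared bounded by sum of squares
  have hnorm : ∀ v : Fin d → ℝ, ‖v‖ ^ 2 ≤ ∑ i, (v i) ^ 2 := by
    intro v
    have hS : 0 ≤ ∑ i, (v i) ^ 2 := Finset.sum_nonneg fun i _ => sq_nonneg _
    have h1 : ‖v‖ ≤ Real.sqrt (∑ i, (v i) ^ 2) := by
      refine (pi_norm_le_iff_of_nonneg (Real.sqrt_nonneg _)).2 fun i => ?_
      rw [Real.norm_eq_abs, ← Real.sqrt_sq_eq_abs]
      exact Real.sqrt_le_sqrt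
        (Finset.single_le_sum (fun j _ => sq_nonneg (v j)) (Finset.mem_univ i))
    calc ‖v‖ ^ 2 ≤ Real.sqrt (∑ i, (v i) ^ 2) ^ 2 :=
          pow_le_pow_left₀ (norm_nonneg _) h1 2
      _ = ∑ i, (v i) ^ 2 := Real.sq_sqrt hS
  set B : ℝ := Cp * Ck * L ^ 2 * ((d : ℝ) * μ₂) with hB
  have hB0 : 0 ≤ B :=
    mul_nonneg (mul_nonneg (mul_nonneg hCp0 hCk0) (sq_nonneg L))
      (mul_nonneg (Nat.cast_nonneg d) hμ₂0)
  -- nonnegativity of the second moment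
  have hE0 : ∀ h : ℝ,
      0 ≤ ∫ ω, (rescaledKernel d k h (x - X ω) * (fj (X ω) - fj x)) ^ 2 ∂ℙ :=
    fun h => integral_nonneg fun ω => sq_nonneg _
  -- the key bound
  have key : ∀ h : ℝ, 0 < h →
      (∫ ω, (rescaledKernel d k h (x - X ω) * (fj (X ω) - fj x)) ^ 2 ∂ℙ)
        ≤ B * (h ^ 2 * (h ^ d)⁻¹) := by
    intro h hh
    have hhd : (0 : ℝ) < h ^ d := pow_pos hh d
    have hhd' : (h : ℝ) ^ d ≠ 0 := ne_of_gt hhd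
    set g : (Fin d → ℝ) → ℝ :=
      fun y => (rescaledKernel d k h (x - y) * (fj y - fj x)) ^ 2 with hgdef
    set G : (Fin d → ℝ) → ℝ := fun v => h ^ 2 * ∑ i, v i * v i * k v with hGdef
    set F : (Fin d → ℝ) → ℝ :=
      fun u => (h ^ d)⁻¹ * k (h⁻¹ • u) * ∑ i, (u i) ^ 2 with hFdef
    have hFG : ∀ u : (Fin d → ℝ), F u = (h ^ d)⁻¹ * G (h⁻¹ • u) := by
      intro u
      have hne : h ≠ 0 := hh.ne'
      simp only [hFdef, hGdef, Pi.smul_apply, smul_eq_mul, Finset.mul_sum]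
      exact Finset.sum_congr rfl fun i _ => by field_simp
    -- integrability
    have hG_int : Integrable G := by
      exact (integrable_finset_sum _ fun i _ => hk_mom2_int i i).const_mul _
    have hF_int : Integrable F := by
      have h1 : Integrable (fun u => G (h⁻¹ • u)) :=
        hG_int.comp_smul (inv_ne_zero hh.ne')
      exact (h1.const_mul ((h ^ d)⁻¹)).congr (ae_of_all _ fun u => (hFG u).symm)
    have hFx_int : Integrable (fun y => F (x - y)) := hF_int.comp_sub_left x
    -- the integral of F
    have hIF : (∫ y, F (x - y)) = h ^ 2 * ((d : ℝ) * μ₂) := by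
      rw [integral_sub_left_eq_self F volume x]
      have e1 : (∫ u, F u) = (h ^ d)⁻¹ * ∫ u, G (h⁻¹ • u) := by
        simp_rw [hFG]; rw [integral_const_mul]
      have e2 : (∫ u, G (h⁻¹ • u)) = h ^ d * ∫ v, G v := by
        rw [Measure.integral_comp_inv_smul volume G h]
        rw [Module.finrank_fin_fun (R := ℝ), abs_of_pos hhd, smul_eq_mul]
      have e3 : (∫ v, G v) = h ^ 2 * ((d : ℝ) * μ₂) := by
        simp only [hGdef]
        rw [integral_const_mul, integral_finset_sum _ fun i _ => hk_mom2_int i i]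
        have : ∀ i : Fin d, (∫ v : Fin d → ℝ, v i * v i * k v) = μ₂ := by
          intro i; simpa using hk_mom2 i i
        simp only [this, Finset.sum_const, Finset.card_univ, Fintype.card_fin,
          nsmul_eq_mul]
      rw [e1, e2, e3, ← mul_assoc, inv_mul_cancel₀ hhd', one_mul]
    -- law of X : rewrite the expectation as an integral against the density
    have hg_meas : Measurable g := by
      have hk' : Measurable fun y : Fin d → ℝ => k (h⁻¹ • (x - y)) :=
        hk_meas.comp ((measurable_const.sub measurable_id).const_smul h⁻¹)
      have hfj' : Measurable fun y : Fin d → ℝ => fj y - fj x :=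
        (hfj_smooth.continuous.measurable).sub measurable_const
      exact ((measurable_const.mul hk').mul hfj').pow_const 2
    have law : (∫ ω, (rescaledKernel d k h (x - X ω) * (fj (X ω) - fj x)) ^ 2 ∂ℙ)
        = ∫ y, p y * g y := by
      have l1 : (∫ ω, g (X ω) ∂ℙ) = ∫ y, g y ∂(Measure.map X ℙ) :=
        (integral_map hX_meas.aemeasurable hg_meas.aestronglyMeasurable).symm
      have l2 : (Measure.map X ℙ)
          = volume.withDensity (fun y => ((p y).toNNReal : ENNReal)) := by
        rw [hX_law]; rfl
      have l3 : (∫ y, g y ∂(volume.withDensity (fun y => ((p y).toNNReal : ENNReal))))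
          = ∫ y, (p y).toNNReal • g y := by
        exact integral_withDensity_eq_integral_smul
          (hp_smooth.continuous.measurable.real_toNNReal) g
      rw [show (∫ ω, (rescaledKernel d k h (x - X ω) * (fj (X ω) - fj x)) ^ 2 ∂ℙ)
          = ∫ ω, g (X ω) ∂ℙ from rfl, l1, l2, l3]
      refine integral_congr_ae (ae_of_all _ fun y => ?_)
      simp [NNReal.smul_def, Real.coe_toNNReal _ (hp_nonneg y)]
    -- pointwise bound
    have hpt : ∀ y : Fin d → ℝ,
        p y * g y ≤ (Cp * Ck * L ^ 2) * ((h ^ d)⁻¹ * F (x - y)) := by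
      intro y
      have hk'0 : 0 ≤ k (h⁻¹ • (x - y)) := hk_nonneg _
      have hS0 : 0 ≤ ∑ i, ((x - y) i) ^ 2 := Finset.sum_nonneg fun i _ => sq_nonneg _
      have hΔ : (fj y - fj x) ^ 2 ≤ L ^ 2 * ∑ i, ((x - y) i) ^ 2 := by
        have h3 : (fj y - fj x) ^ 2 ≤ (L * ‖y - x‖) ^ 2 := by
          rw [← sq_abs]
          exact pow_le_pow_left₀ (abs_nonneg _) (hlip y) 2
        have h4 : ‖y - x‖ ^ 2 ≤ ∑ i, ((x - y) i) ^ 2 := by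
          refine le_trans (hnorm (y - x)) (le_of_eq ?_)
          exact Finset.sum_congr rfl fun i _ => by
            simp only [Pi.sub_apply]; ring
        calc (fj y - fj x) ^ 2 ≤ L ^ 2 * ‖y - x‖ ^ 2 := by rw [mul_pow] at h3; exact h3
          _ ≤ L ^ 2 * ∑ i, ((x - y) i) ^ 2 :=
            mul_le_mul_of_nonneg_left h4 (sq_nonneg L)
      have hksq : (k (h⁻¹ • (x - y))) ^ 2 ≤ Ck * k (h⁻¹ • (x - y)) := by
        rw [sq]
        exact mul_le_mul_of_nonneg_right (hCk _) hk'0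
      have inner1 : (k (h⁻¹ • (x - y))) ^ 2 * (fj y - fj x) ^ 2
          ≤ (Ck * k (h⁻¹ • (x - y))) * (L ^ 2 * ∑ i, ((x - y) i) ^ 2) :=
        mul_le_mul hksq hΔ (sq_nonneg _) (mul_nonneg hCk0 hk'0)
      have inner2 : ((h ^ d)⁻¹) ^ 2 * ((k (h⁻¹ • (x - y))) ^ 2 * (fj y - fj x) ^ 2)
          ≤ ((h ^ d)⁻¹) ^ 2 * ((Ck * k (h⁻¹ • (x - y))) * (L ^ 2 * ∑ i, ((x - y) i) ^ 2)) :=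
        mul_le_mul_of_nonneg_left inner1 (sq_nonneg _)
      have outer : p y * (((h ^ d)⁻¹) ^ 2 * ((k (h⁻¹ • (x - y))) ^ 2 * (fj y - fj x) ^ 2))
          ≤ Cp * (((h ^ d)⁻¹) ^ 2 * ((Ck * k (h⁻¹ • (x - y))) * (L ^ 2 * ∑ i, ((x - y) i) ^ 2))) := by
        refine mul_le_mul (hCp y) inner2 ?_ hCp0
        positivity
      calc p y * g y
          = p y * (((h ^ d)⁻¹) ^ 2 * ((k (h⁻¹ • (x - y))) ^ 2 * (fj y - fj x) ^ 2)) := by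
            simp only [hgdef, rescaledKernel]; ring
        _ ≤ Cp * (((h ^ d)⁻¹) ^ 2 * ((Ck * k (h⁻¹ • (x - y))) * (L ^ 2 * ∑ i, ((x - y) i) ^ 2))) := outer
        _ = (Cp * Ck * L ^ 2) * ((h ^ d)⁻¹ * F (x - y)) := by
            simp only [hFdef]; ring
    -- put it together
    rw [law]
    have hmono : (∫ y, p y * g y)
        ≤ ∫ y, (Cp * Ck * L ^ 2) * ((h ^ d)⁻¹ * F (x - y)) := by
      refine integral_mono_of_nonneg
        (ae_of_all _ fun y => mul_nonneg (hp_nonneg y) (sq_nonneg _))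
        (((hFx_int.const_mul ((h ^ d)⁻¹)).const_mul (Cp * Ck * L ^ 2)))
        (ae_of_all _ hpt)
    refine le_trans hmono (le_of_eq ?_)
    rw [integral_const_mul, integral_const_mul, hIF, hB]
    ring
  constructor
  · refine ⟨B + 1, by linarith, 1, one_pos, fun h hh hh1 => ?_⟩
    have hz : h ^ ((2 : ℤ) - (d : ℤ)) = h ^ 2 * (h ^ d)⁻¹ := by
      rw [zpow_sub₀ hh.ne', div_eq_mul_inv, zpow_natCast,
        show ((2:ℤ)) = ((2:ℕ):ℤ) by norm_num, zpow_natCast]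
    rw [hz]
    calc (∫ ω, (rescaledKernel d k h (x - X ω) * (fj (X ω) - fj x)) ^ 2 ∂ℙ)
        ≤ B * (h ^ 2 * (h ^ d)⁻¹) := key h hh
      _ ≤ (B + 1) * (h ^ 2 * (h ^ d)⁻¹) := by
          have : (0:ℝ) ≤ h ^ 2 * (h ^ d)⁻¹ := by positivity
          nlinarith
  · have upper : ∀ᶠ h : ℝ in 𝓝[>] (0 : ℝ),
        h ^ d * (∫ ω, (rescaledKernel d k h (x - X ω) * (fj (X ω) - fj x)) ^ 2 ∂ℙ)
          ≤ B * h ^ 2 := by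
      filter_upwards [self_mem_nhdsWithin] with h hh
      have hh' : (0:ℝ) < h := hh
      have hhd : (0:ℝ) < h ^ d := pow_pos hh' d
      calc h ^ d * (∫ ω, (rescaledKernel d k h (x - X ω) * (fj (X ω) - fj x)) ^ 2 ∂ℙ)
          ≤ h ^ d * (B * (h ^ 2 * (h ^ d)⁻¹)) :=
            mul_le_mul_of_nonneg_left (key h hh') hhd.le
        _ = B * h ^ 2 * (h ^ d * (h ^ d)⁻¹) := by ring
        _ = B * h ^ 2 := by rw [mul_inv_cancel₀ hhd.ne', mul_one]
    have lower : ∀ᶠ h : ℝ in 𝓝[>] (0 : ℝ),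
        (0:ℝ) ≤ h ^ d * (∫ ω, (rescaledKernel d k h (x - X ω) * (fj (X ω) - fj x)) ^ 2 ∂ℙ) := by
      filter_upwards [self_mem_nhdsWithin] with h hh
      have hh' : (0:ℝ) < h := hh
      exact mul_nonneg (pow_pos hh' d).le (hE0 h)
    have htop : Tendsto (fun h : ℝ => B * h ^ 2) (𝓝[>] (0:ℝ)) (𝓝 0) := by
      have : Tendsto (fun h : ℝ => B * h ^ 2) (𝓝 (0:ℝ)) (𝓝 (B * 0 ^ 2)) :=
        (continuous_const.mul (continuous_pow 2)).tendsto 0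
      simpa using this.mono_left nhdsWithin_le_nhds
    exact tendsto_of_tendsto_of_tendsto_of_le_of_le' tendsto_const_nhds htop lower upper
end
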